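/- arXiv:2410.12917 — 2 statements merged into one kernel-verified Lean document; each statement's English description precedes it below -/
import Mathlib

section
/- Let F be a nonempty family of holomorphic injective functions f : 𝔻 → ℂ with f(0) = 0 and f'(0) = 1, which is closed under omitted-value Möbius compositions: whenever f ∈ F and c ∈ ℂ \ f(𝔻), the function z ↦ c·f(z)/(c − f(z)) also belongs to F. Set A = sup_{f ∈ F} |f''(0)/2|, and assume 0 < A < ∞. Then for every f ∈ F the image f(𝔻) contains the open disk {w ∈ ℂ : |w| < 1/(2A)}. -/
open Complex Metric Filter Topology

/-!
If `f ∈ F` omitted a value `c` with `|c| < 1/(2A)`, then `g = c f/(c - f)` would also lie in `F`,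
and a direct computation gives `a₂(g) = a₂(f) + 1/c`. Hence `1/|c| ≤ |a₂(g)| + |a₂(f)| ≤ 2A`,
contradicting `|c| < 1/(2A)`.
-/

section MobiusComp

variable {𝕜 : Type*} [NontriviallyNormedField 𝕜] {f : 𝕜 → 𝕜} {f' f'' c x : 𝕜}

theorem HasDerivAt.mobius_comp (hf : HasDerivAt f f' x) (hc : c - f x ≠ 0) :
    HasDerivAt (fun z => c * f z / (c - f z)) (c ^ 2 * f' / (c - f x) ^ 2) x := by
  refine ((hf.const_mul c).div (hf.const_sub c) hc).congr_deriv ?_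
  field_simp
  ring

theorem iteratedDeriv_two_mobius_comp (hf : ∀ᶠ z in 𝓝 x, DifferentiableAt 𝕜 f z)
    (hf' : HasDerivAt (deriv f) f'' x) (hc : c - f x ≠ 0) :
    iteratedDeriv 2 (fun z => c * f z / (c - f z)) x =
      c ^ 2 * (f'' * (c - f x) + 2 * deriv f x ^ 2) / (c - f x) ^ 3 := by
  have hcont : ∀ᶠ z in 𝓝 x, c - f z ≠ 0 :=
    (continuousAt_const.sub hf.self_of_nhds.continuousAt).eventually_ne hc
  have hderiv : deriv (fun z => c * f z / (c - f z)) =ᶠ[𝓝 x]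
      fun z => c ^ 2 * deriv f z / (c - f z) ^ 2 := by
    filter_upwards [hf, hcont] with z hfz hcz
    exact (hfz.hasDerivAt.mobius_comp hcz).deriv
  have hsecond : HasDerivAt (fun z => c ^ 2 * deriv f z / (c - f z) ^ 2)
      (c ^ 2 * (f'' * (c - f x) + 2 * deriv f x ^ 2) / (c - f x) ^ 3) x := by
    refine ((hf'.const_mul (c ^ 2)).div ((hf.self_of_nhds.hasDerivAt.const_sub c).pow 2)
      (pow_ne_zero 2 hc)).congr_deriv ?_
    simp only [Pi.pow_apply]
    field_simp
    ring
  rw [iteratedDeriv_succ, iteratedDeriv_one, hderiv.deriv_eq, hsecond.deriv]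

end MobiusComp

theorem iteratedDeriv_two_mobius_comp_of_normalized {U : Set ℂ} {f : ℂ → ℂ} {c : ℂ}
    (hU : IsOpen U) (h0 : (0 : ℂ) ∈ U) (hf : DifferentiableOn ℂ f U) (hf0 : f 0 = 0)
    (hf'0 : deriv f 0 = 1) (hc : c ≠ 0) :
    iteratedDeriv 2 (fun z => c * f z / (c - f z)) 0 = iteratedDeriv 2 f 0 + 2 / c := by
  have han : AnalyticOnNhd ℂ f U := hf.analyticOnNhd hU
  have hdiff : ∀ᶠ z in 𝓝 0, DifferentiableAt ℂ f z :=
    eventually_of_mem (hU.mem_nhds h0) fun z hz => (han z hz).differentiableAt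
  rw [iteratedDeriv_two_mobius_comp hdiff (han.deriv 0 h0).differentiableAt.hasDerivAt
    (by simpa [hf0] using hc), iteratedDeriv_succ, iteratedDeriv_one, hf0, hf'0]
  field_simp
  ring

theorem koebe_type_covering_general (F : Set (ℂ → ℂ))
    (hF : ∀ f ∈ F, DifferentiableOn ℂ f (ball (0 : ℂ) 1) ∧
      Set.InjOn f (ball (0 : ℂ) 1) ∧ f 0 = 0 ∧ deriv f 0 = 1)
    (hclosed : ∀ f ∈ F, ∀ c ∉ f '' ball (0 : ℂ) 1,
      (fun z => c * f z / (c - f z)) ∈ F)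
    (A : ℝ)
    (hA : IsLUB ((fun f => ‖iteratedDeriv 2 f 0 / 2‖) '' F) A) :
    ∀ f ∈ F, ball (0 : ℂ) (1 / (2 * A)) ⊆ f '' ball (0 : ℂ) 1 := by
  intro f hf c hc
  by_contra hcf
  obtain ⟨hd, -, hf0, hf'0⟩ := hF f hf
  have hc0 : c ≠ 0 := by
    rintro rfl
    exact hcf ⟨0, mem_ball_self one_pos, hf0⟩
  have ha₂ := iteratedDeriv_two_mobius_comp_of_normalized isOpen_ball (mem_ball_self one_pos)
    hd hf0 hf'0 hc0
  have hinv : ‖c‖⁻¹ ≤ 2 * A := by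
    have hgA := hA.1 ⟨_, hclosed f hf c hcf, rfl⟩
    have hfA := hA.1 ⟨f, hf, rfl⟩
    simp only [ha₂] at hgA
    calc ‖c‖⁻¹ = ‖(iteratedDeriv 2 f 0 + 2 / c) / 2 - iteratedDeriv 2 f 0 / 2‖ := by
          rw [← norm_inv]; congr 1; ring
      _ ≤ _ := norm_sub_le _ _
      _ ≤ 2 * A := by linarith
  have hcpos : 0 < ‖c‖ := norm_pos_iff.2 hc0
  have hA2 : 0 < 2 * A := (inv_pos.2 hcpos).trans_le hinv
  rw [mem_ball_zero_iff, lt_div_iff₀ hA2] at hc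
  rw [inv_le_iff_one_le_mul₀ hcpos] at hinv
  linarith

/-- Lemma 1 (covering part): for a nonempty family `F` of normalized univalent functions on
the unit disk closed under omitted-value Möbius compositions, with
`A = sup_{f ∈ F} |a₂(f)|` satisfying `0 < A < ∞`, every `f ∈ F` covers the disk of
radius `1/(2A)` about the origin. -/
theorem koebe_type_covering (F : Set (ℂ → ℂ)) (hne : F.Nonempty)
    (hF : ∀ f ∈ F, DifferentiableOn ℂ f (ball (0 : ℂ) 1) ∧
      Set.InjOn f (ball (0 : ℂ) 1) ∧ f 0 = 0 ∧ deriv f 0 = 1)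
    (hclosed : ∀ f ∈ F, ∀ c ∉ f '' ball (0 : ℂ) 1,
      (fun z => c * f z / (c - f z)) ∈ F)
    (A : ℝ) (hApos : 0 < A)
    (hA : IsLUB ((fun f => ‖iteratedDeriv 2 f 0 / 2‖) '' F) A) :
    ∀ f ∈ F, ball (0 : ℂ) (1 / (2 * A)) ⊆ f '' ball (0 : ℂ) 1 :=
  koebe_type_covering_general F hF hclosed A hA
end

section
/- Let F be a nonempty family of holomorphic injective functions f : 𝔻 → ℂ with f(0) = 0 and f'(0) = 1, closed under omitted-value Möbius compositions: whenever f ∈ F and c ∈ ℂ \ f(𝔻), the function z ↦ c·f(z)/(c − f(z)) also belongs to F. Set A = sup_{f ∈ F} |f''(0)/2| and assume 0 < A < ∞. If some f ∈ F omits a value c with |c| = 1/(2A) (i.e., c ∉ f(𝔻)), then |f''(0)/2| = A, i.e., f is a maximizing function for the second coefficient in F. -/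
/-!
Composing `f` with the Möbius map `w ↦ c w / (c - w)` shifts the second coefficient by `1/c`:
`a₂(g) = a₂(f) + 1/c` for `g = c f / (c - f) ∈ F`. Since `|1/c| = 2A` and `|a₂(g)| ≤ A`, the
triangle inequality gives `|a₂(f)| ≥ 2A - A = A`.
-/

open Complex Metric

lemma hasDerivAt_mul_div_sub {c w : ℂ} (hw : w ≠ c) :
    HasDerivAt (fun w => c * w / (c - w)) (c ^ 2 / (c - w) ^ 2) w :=
  ((hasDerivAt_id' w).const_mul c).fun_div ((hasDerivAt_id' w).const_sub c)
    (sub_ne_zero.mpr hw.symm) |>.congr_deriv (by ring)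

lemma iteratedDeriv_two_mul_div_sub_zero {c : ℂ} (hc : c ≠ 0) :
    iteratedDeriv 2 (fun w => c * w / (c - w)) 0 = 2 / c := by
  have hderiv : deriv (fun w => c * w / (c - w)) =ᶠ[nhds 0] fun w => c ^ 2 / (c - w) ^ 2 := by
    filter_upwards [isOpen_ne.mem_nhds hc.symm] with w hw
    exact (hasDerivAt_mul_div_sub hw).deriv
  have hderiv2 : HasDerivAt (fun w => c ^ 2 / (c - w) ^ 2) (2 / c) 0 :=
    (hasDerivAt_const (0 : ℂ) (c ^ 2)).fun_div (((hasDerivAt_id' 0).const_sub c).fun_pow 2)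
      (by simpa using hc) |>.congr_deriv (by field_simp; ring)
  rw [iteratedDeriv_succ, iteratedDeriv_one, hderiv.deriv_eq, hderiv2.deriv]

lemma iteratedDeriv_two_mul_div_sub_comp {f : ℂ → ℂ} {c : ℂ} (hf : ContDiffAt ℂ 2 f 0)
    (hf0 : f 0 = 0) (hc : c ≠ 0) :
    iteratedDeriv 2 (fun z => c * f z / (c - f z)) 0
      = iteratedDeriv 2 f 0 + 2 * deriv f 0 ^ 2 / c := by
  have hm : ContDiffAt ℂ 2 (fun w => c * w / (c - w)) (f 0) := by
    rw [hf0]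
    exact (contDiffAt_id.const_smul c).div (contDiffAt_const.sub contDiffAt_id) (by simpa using hc)
  rw [← Function.comp_def (fun w => c * w / (c - w)) f, iteratedDeriv_comp_two hm hf, hf0,
    iteratedDeriv_two_mul_div_sub_zero hc, (hasDerivAt_mul_div_sub hc.symm).deriv]
  field_simp
  ring

theorem omitted_value_on_critical_circle_general (F : Set (ℂ → ℂ))
    (hF : ∀ f ∈ F, DifferentiableOn ℂ f (ball (0 : ℂ) 1) ∧
      Set.InjOn f (ball (0 : ℂ) 1) ∧ f 0 = 0 ∧ deriv f 0 = 1)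
    (hclosed : ∀ f ∈ F, ∀ c ∉ f '' ball (0 : ℂ) 1,
      (fun z => c * f z / (c - f z)) ∈ F)
    (A : ℝ)
    (hA : IsLUB ((fun f => ‖iteratedDeriv 2 f 0 / 2‖) '' F) A)
    (f : ℂ → ℂ) (hfF : f ∈ F) (c : ℂ) (hc : ‖c‖ = 1 / (2 * A))
    (hom : c ∉ f '' ball (0 : ℂ) 1) :
    ‖iteratedDeriv 2 f 0 / 2‖ = A := by
  obtain ⟨hdf, -, hf0, hf1⟩ := hF f hfF
  have hc0 : c ≠ 0 := by
    rintro rfl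
    exact hom ⟨0, mem_ball_self one_pos, hf0⟩
  have hf2 : ContDiffAt ℂ 2 f 0 :=
    (hdf.analyticOnNhd isOpen_ball 0 (mem_ball_self one_pos)).contDiffAt
  have hshift : iteratedDeriv 2 (fun z => c * f z / (c - f z)) 0 / 2
      = iteratedDeriv 2 f 0 / 2 + 1 / c := by
    rw [iteratedDeriv_two_mul_div_sub_comp hf2 hf0 hc0, hf1]
    ring
  have hfA : ‖iteratedDeriv 2 f 0 / 2‖ ≤ A := hA.1 ⟨f, hfF, rfl⟩
  have hgA := hA.1 ⟨_, hclosed f hfF c hom, rfl⟩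
  simp only [hshift] at hgA
  refine le_antisymm hfA ?_
  have : 2 * A ≤ A + ‖iteratedDeriv 2 f 0 / 2‖ := calc
    2 * A = ‖1 / c‖ := by rw [norm_div, norm_one, hc, one_div_one_div]
    _ = ‖(iteratedDeriv 2 f 0 / 2 + 1 / c) - iteratedDeriv 2 f 0 / 2‖ := by
      rw [add_sub_cancel_left]
    _ ≤ ‖iteratedDeriv 2 f 0 / 2 + 1 / c‖ + ‖iteratedDeriv 2 f 0 / 2‖ := norm_sub_le _ _
    _ ≤ A + ‖iteratedDeriv 2 f 0 / 2‖ := by gcongr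
  linarith

/-- Lemma 1 (sharpness, 'only if' direction): in a Möbius-closed family `F` as above with
`A = sup_{f ∈ F} |a₂(f)|`, `0 < A < ∞`, if some `f ∈ F` omits a value `c` with
`|c| = 1/(2A)`, then `|a₂(f)| = A`, i.e. `f` maximizes the second coefficient. -/
theorem omitted_value_on_critical_circle (F : Set (ℂ → ℂ)) (hne : F.Nonempty)
    (hF : ∀ f ∈ F, DifferentiableOn ℂ f (ball (0 : ℂ) 1) ∧
      Set.InjOn f (ball (0 : ℂ) 1) ∧ f 0 = 0 ∧ deriv f 0 = 1)
    (hclosed : ∀ f ∈ F, ∀ c ∉ f '' ball (0 : ℂ) 1,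
      (fun z => c * f z / (c - f z)) ∈ F)
    (A : ℝ) (hApos : 0 < A)
    (hA : IsLUB ((fun f => ‖iteratedDeriv 2 f 0 / 2‖) '' F) A)
    (f : ℂ → ℂ) (hfF : f ∈ F) (c : ℂ) (hc : ‖c‖ = 1 / (2 * A))
    (hom : c ∉ f '' ball (0 : ℂ) 1) :
    ‖iteratedDeriv 2 f 0 / 2‖ = A :=
  omitted_value_on_critical_circle_general F hF hclosed A hA f hfF c hc hom
end
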